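/- arXiv:2206.04566 — 2 statements merged into one kernel-verified Lean document; each statement's English description precedes it below -/
import Mathlib

section
/- Let D^𝕋 be a generalized connection on 𝕋M and d^𝕋 the induced derivation on 𝕋M-forms. Then the composite d^𝕋 ∘ d^𝕋 is tensorial — i.e. for every k the value (d^𝕋(d^𝕋 θ))(x₀,…,x_{k+1}) is C∞(M)-linear in θ and in each argument x_i — if and only if D^𝕋 is TM-torsion free. In that case the quotient Ω̃*_𝕋(M) of Ω*_𝕋(M) by the image of d^𝕋 ∘ d^𝕋 is a cochain complex under the induced derivation d̃^𝕋, i.e. d̃^𝕋 ∘ d̃^𝕋 = 0. -/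
/-!
An algebraic model of generalized geometry on a smooth manifold `M`:
`C` plays the role of the smooth functions `C^∞(M)`, `Xv` the `C`-module of
vector fields `Γ(TM)` (acting on functions via `act` and with Lie bracket `lie`),
`Θ` the `C`-module of 1-forms `Γ(T*M)` (with evaluation `ev`), and
`TT Xv Θ := Xv × Θ` the sections of the generalized tangent bundle
`𝕋M = TM ⊕ T*M`.
-/

noncomputable section

namespace GenGeom

section Core

variable {C : Type} [CommRing C] [Algebra ℝ C]
variable {Xv : Type} [AddCommGroup Xv] [Module C Xv] [Module ℝ Xv] [IsScalarTower ℝ C Xv]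
variable {Θ : Type} [AddCommGroup Θ] [Module C Θ] [Module ℝ Θ] [IsScalarTower ℝ C Θ]

/-- Sections of the generalized tangent bundle `𝕋M = TM ⊕ T*M`. -/
abbrev TT (Xv Θ : Type) := Xv × Θ

/-- The natural pairing `⟨X+ξ, Y+η⟩ = ½(η(X) + ξ(Y))` on `𝕋M`. -/
def pairTT (ev : Θ → Xv → C) (x y : TT Xv Θ) : C :=
  (2:ℝ)⁻¹ • (ev x.2 y.1 + ev y.2 x.1)

/-- Axioms for the action of vector fields on functions and the Lie bracket. -/
structure IsDiffStructure (act : Xv → C → C) (lie : Xv → Xv → Xv) : Prop where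
  act_add_left : ∀ Z W f, act (Z + W) f = act Z f + act W f
  act_smul_left : ∀ (f : C) Z g, act (f • Z) g = f * act Z g
  act_add_right : ∀ Z f g, act Z (f + g) = act Z f + act Z g
  act_mul_right : ∀ Z f g, act Z (f * g) = f * act Z g + g * act Z f
  act_const : ∀ Z (r : ℝ), act Z (algebraMap ℝ C r) = 0
  lie_antisymm : ∀ Z W, lie Z W = - lie W Z
  lie_add_right : ∀ Z W U, lie Z (W + U) = lie Z W + lie Z U
  lie_smul_right : ∀ Z (f : C) W, lie Z (f • W) = act Z f • W + f • lie Z W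
  lie_jacobi : ∀ Z W U, lie (lie Z W) U = lie Z (lie W U) - lie W (lie Z U)
  lie_act : ∀ Z W f, act (lie Z W) f = act Z (act W f) - act W (act Z f)
  act_faithful : ∀ Z, (∀ f, act Z f = 0) → Z = 0

/-- Axioms for the evaluation of 1-forms on vector fields; on a smooth manifold
`Γ(T*M) ≅ Hom_{C^∞}(Γ(TM), C^∞)`, so `ev` is bilinear and faithful. -/
structure IsEvStructure (ev : Θ → Xv → C) : Prop where
  add_left : ∀ ξ η X, ev (ξ + η) X = ev ξ X + ev η X
  smul_left : ∀ (f : C) ξ X, ev (f • ξ) X = f * ev ξ X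
  add_right : ∀ ξ X Y, ev ξ (X + Y) = ev ξ X + ev ξ Y
  smul_right : ∀ ξ (f : C) X, ev ξ (f • X) = f * ev ξ X
  ev_injective : ∀ ξ η, (∀ X, ev ξ X = ev η X) → ξ = η

/-- A generalized connection on `𝕋M`. -/
structure IsGenConn (act : Xv → C → C) (D : TT Xv Θ → TT Xv Θ → TT Xv Θ) : Prop where
  add_left : ∀ x y z, D (x + y) z = D x z + D y z
  smul_left : ∀ (f : C) x y, D (f • x) y = f • D x y
  add_right : ∀ x y z, D x (y + z) = D x y + D x z
  leibniz : ∀ x (f : C) y, D x (f • y) = act x.1 f • y + f • D x y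

/-- A generalized connection on a vector bundle with `C`-module of sections `V`. -/
structure IsGenConnOn {V : Type} [AddCommGroup V] [Module C V]
    (act : Xv → C → C) (DV : TT Xv Θ → V → V) : Prop where
  add_left : ∀ x y v, DV (x + y) v = DV x v + DV y v
  smul_left : ∀ (f : C) x v, DV (f • x) v = f • DV x v
  add_right : ∀ x v w, DV x (v + w) = DV x v + DV x w
  leibniz : ∀ x (f : C) v, DV x (f • v) = act x.1 f • v + f • DV x v

/-- The diamond bracket `x ◇ y = D_x y - D_y x` of a generalized connection. -/
def diamond (D : TT Xv Θ → TT Xv Θ → TT Xv Θ) (x y : TT Xv Θ) : TT Xv Θ := D x y - D y x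

/-- The Jacobiator `[x ◇ y ◇ z] = (x ◇ y) ◇ z + (y ◇ z) ◇ x + (z ◇ x) ◇ y`. -/
def jacobiator (D : TT Xv Θ → TT Xv Θ → TT Xv Θ) (x y z : TT Xv Θ) : TT Xv Θ :=
  diamond D (diamond D x y) z + diamond D (diamond D y z) x + diamond D (diamond D z x) y

/-- `TM`-torsion freeness: `π(x ◇ y) = [π x, π y]`. -/
def TorsionFree (lie : Xv → Xv → Xv) (D : TT Xv Θ → TT Xv Θ → TT Xv Θ) : Prop :=
  ∀ x y : TT Xv Θ, (diamond D x y).1 = lie x.1 y.1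

/-- Raw `𝕋M`-forms of degree `k`; genuine forms `Ω^k_𝕋(M) = Γ(Λ^k 𝕋M)` are the
`C`-multilinear alternating ones (cf. `IsFormP`), regarded as forms via `2⟨,⟩`. -/
abbrev Wform (C Xv Θ : Type) (k : ℕ) : Type := (Fin k → TT Xv Θ) → C

/-- Being a genuine (C-multilinear alternating) `𝕋M`-form. -/
def IsFormP {k : ℕ} (θ : Wform C Xv Θ k) : Prop :=
  (∀ (v : Fin k → TT Xv Θ) (i : Fin k) (x y : TT Xv Θ),
      θ (Function.update v i (x + y)) = θ (Function.update v i x) + θ (Function.update v i y)) ∧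
  (∀ (v : Fin k → TT Xv Θ) (i : Fin k) (f : C) (x : TT Xv Θ),
      θ (Function.update v i (f • x)) = f * θ (Function.update v i x)) ∧
  (∀ (v : Fin k → TT Xv Θ) (i j : Fin k), i ≠ j → v i = v j → θ v = 0)

/-- Covariant derivative of an `A`-valued `𝕋M`-form along `x`. -/
def covDG {A : Type} [AddCommGroup A] (actA : Xv → A → A)
    (D : TT Xv Θ → TT Xv Θ → TT Xv Θ) (x : TT Xv Θ) {k : ℕ}
    (θ : (Fin k → TT Xv Θ) → A) : (Fin k → TT Xv Θ) → A :=
  fun v => actA x.1 (θ v) - ∑ i, θ (Function.update v i (D x (v i)))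

/-- The derivation `d^𝕋` of `𝕋M`-forms induced by a generalized connection:
`(d^𝕋θ)(x₀,…,x_k) = Σ_i (−1)^i (D_{x_i}θ)(x₀,…,x̂_i,…,x_k)`. -/
def dTG {A : Type} [AddCommGroup A] (actA : Xv → A → A)
    (D : TT Xv Θ → TT Xv Θ → TT Xv Θ) {k : ℕ}
    (θ : (Fin k → TT Xv Θ) → A) : (Fin (k+1) → TT Xv Θ) → A :=
  fun v => ∑ i : Fin (k+1), ((-1 : ℤ)^(i : ℕ)) • covDG actA D (v i) θ (i.removeNth v)

/-- `d^𝕋` on scalar `𝕋M`-forms. -/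
abbrev dT (act : Xv → C → C) (D : TT Xv Θ → TT Xv Θ → TT Xv Θ) {k : ℕ}
    (θ : Wform C Xv Θ k) : Wform C Xv Θ (k+1) := dTG act D θ

/-- The submodule generated by the image of `𝒥^𝕋 = d^𝕋 ∘ d^𝕋` in each degree. -/
def JsubG {A : Type} [AddCommGroup A] (R : Type) [CommRing R] [Module R A]
    (actA : Xv → A → A) (D : TT Xv Θ → TT Xv Θ → TT Xv Θ) :
    (k : ℕ) → Submodule R ((Fin k → TT Xv Θ) → A)
  | 0 => ⊥
  | 1 => ⊥
  | (k+2) => Submodule.span R {ψ | ∃ θ : (Fin k → TT Xv Θ) → A, ψ = dTG actA D (dTG actA D θ)}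

/-- Contraction `ι_x` of `𝕋M`-forms (under the identification via `2⟨,⟩`). -/
def iotaTT (x : TT Xv Θ) {k : ℕ} (θ : Wform C Xv Θ (k+1)) : Wform C Xv Θ k :=
  fun v => θ (Fin.cons x v)

/-- A Riemannian metric, presented by its musical maps `♭ = gf` and `♯ = gs`. -/
structure IsRiemannian (ev : Θ → Xv → C) (gf : Xv → Θ) (gs : Θ → Xv) : Prop where
  symm : ∀ X Y, ev (gf X) Y = ev (gf Y) X
  add : ∀ X Y, gf (X + Y) = gf X + gf Y
  smul : ∀ (f : C) X, gf (f • X) = f • gf X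
  sharp_flat : ∀ X, gs (gf X) = X
  flat_sharp : ∀ ξ, gf (gs ξ) = ξ

/-- A 2-form `b`, presented by its interior product `X ↦ ι_X b`. -/
structure IsTwoFormMap (ev : Θ → Xv → C) (ib : Xv → Θ) : Prop where
  skew : ∀ X Y, ev (ib X) Y = - ev (ib Y) X
  add : ∀ X Y, ib (X + Y) = ib X + ib Y
  smul : ∀ (f : C) X, ib (f • X) = f • ib X

/-- The scalar metric `g(X,Y)`. -/
def gsc (ev : Θ → Xv → C) (gf : Xv → Θ) (X Y : Xv) : C := ev (gf X) Y
/-- The scalar 2-form `b(X,Y)`. -/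
def bsc (ev : Θ → Xv → C) (ib : Xv → Θ) (X Y : Xv) : C := ev (ib X) Y

/-- `x^{b+} = X + (b+g)X ∈ C₊^b`. -/
def ebp (gf ib : Xv → Θ) (X : Xv) : TT Xv Θ := (X, ib X + gf X)
/-- `x^{b-} = X + (b−g)X ∈ C₋^b`. -/
def ebm (gf ib : Xv → Θ) (X : Xv) : TT Xv Θ := (X, ib X - gf X)
/-- `e^b(X+ξ) = X + ι_X b + ξ`. -/
def ebMap (ib : Xv → Θ) (x : TT Xv Θ) : TT Xv Θ := (x.1, x.2 + ib x.1)

/-- The generalized metric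
`G^b(X+ξ, Y+η) = ½[g(X,Y) + g⁻¹(ξ − ι_X b, η − ι_Y b)]` as a bilinear form. -/
def GbForm (ev : Θ → Xv → C) (gf : Xv → Θ) (gs : Θ → Xv) (ib : Xv → Θ)
    (x y : TT Xv Θ) : C :=
  (2:ℝ)⁻¹ • (ev (gf x.1) y.1 + ev (x.2 - ib x.1) (gs (y.2 - ib y.1)))

/-- A `G^b`-metric connection: preserves both `⟨,⟩` and `G^b`. -/
def IsMetricConn (act : Xv → C → C) (ev : Θ → Xv → C) (gf : Xv → Θ) (gs : Θ → Xv)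
    (ib : Xv → Θ) (D : TT Xv Θ → TT Xv Θ → TT Xv Θ) : Prop :=
  (∀ x y z, act x.1 (pairTT ev y z) = pairTT ev (D x y) z + pairTT ev y (D x z)) ∧
  (∀ x y z, act x.1 (GbForm ev gf gs ib y z)
      = GbForm ev gf gs ib (D x y) z + GbForm ev gf gs ib y (D x z))

/-- The Levi-Civita connection of `g`. -/
structure IsLeviCivita (act : Xv → C → C) (lie : Xv → Xv → Xv) (ev : Θ → Xv → C)
    (gf : Xv → Θ) (nab : Xv → Xv → Xv) : Prop where
  add_left : ∀ X Y Z, nab (X + Y) Z = nab X Z + nab Y Z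
  smul_left : ∀ (f : C) X Y, nab (f • X) Y = f • nab X Y
  add_right : ∀ X Y Z, nab X (Y + Z) = nab X Y + nab X Z
  leibniz : ∀ X (f : C) Y, nab X (f • Y) = act X f • Y + f • nab X Y
  torsion_free : ∀ X Y, nab X Y - nab Y X = lie X Y
  metric : ∀ X Y Z, act X (gsc ev gf Y Z) = gsc ev gf (nab X Y) Z + gsc ev gf Y (nab X Z)

/-- A 3-form `φ`, presented by its interior products `iph X Y = ι_Y ι_X φ = φ(X,Y,·)`. -/
structure IsThreeFormMap (ev : Θ → Xv → C) (iph : Xv → Xv → Θ) : Prop where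
  add_left : ∀ X Y Z, iph (X + Y) Z = iph X Z + iph Y Z
  smul_left : ∀ (f : C) X Y, iph (f • X) Y = f • iph X Y
  add_right : ∀ X Y Z, iph X (Y + Z) = iph X Y + iph X Z
  smul_right : ∀ X (f : C) Y, iph X (f • Y) = f • iph X Y
  alt12 : ∀ X Y Z, ev (iph X Y) Z = - ev (iph Y X) Z
  alt23 : ∀ X Y Z, ev (iph X Y) Z = - ev (iph X Z) Y

/-- `∇^{+φ}_X Y = ∇_X Y + ½ g⁻¹ ι_Y ι_X φ`. -/
def nabP (gs : Θ → Xv) (nab : Xv → Xv → Xv) (iph : Xv → Xv → Θ) (X Y : Xv) : Xv :=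
  nab X Y + (2:ℝ)⁻¹ • gs (iph X Y)
/-- `∇^{-φ}_X Y = ∇_X Y − ½ g⁻¹ ι_Y ι_X φ`. -/
def nabM (gs : Θ → Xv) (nab : Xv → Xv → Xv) (iph : Xv → Xv → Θ) (X Y : Xv) : Xv :=
  nab X Y - (2:ℝ)⁻¹ • gs (iph X Y)

/-- `C₊^b`-component of `x = X + ξ`: `X₊ = ½(X + g⁻¹(ξ − ι_X b))`. -/
def decP (gs : Θ → Xv) (ib : Xv → Θ) (x : TT Xv Θ) : Xv :=
  (2:ℝ)⁻¹ • (x.1 + gs (x.2 - ib x.1))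
/-- `C₋^b`-component of `x = X + ξ`: `X₋ = ½(X − g⁻¹(ξ − ι_X b))`. -/
def decM (gs : Θ → Xv) (ib : Xv → Θ) (x : TT Xv Θ) : Xv :=
  (2:ℝ)⁻¹ • (x.1 - gs (x.2 - ib x.1))

/-- The `(φ,b)`-connection `D^{φ,b}`, defined through its `G^b`-eigendecomposition. -/
def Dphib (gf : Xv → Θ) (gs : Θ → Xv) (ib : Xv → Θ) (nab : Xv → Xv → Xv)
    (iph : Xv → Xv → Θ) (x y : TT Xv Θ) : TT Xv Θ :=
  ebp gf ib (nab (decP gs ib x) (decP gs ib y))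
  + ebm gf ib (nabM gs nab iph (decP gs ib x) (decM gs ib y))
  + ebp gf ib (nabP gs nab iph (decM gs ib x) (decP gs ib y))
  + ebm gf ib (nab (decM gs ib x) (decM gs ib y))

/-- The generalized Bismut connection `D^{φ,ℬ}`, lift of
`∇^{φ,ℬ}_X y^{b±} = ∇^{±φ}_X Y + (b±g)(∇^{±φ}_X Y)`. -/
def DBismut (gf : Xv → Θ) (gs : Θ → Xv) (ib : Xv → Θ) (nab : Xv → Xv → Xv)
    (iph : Xv → Xv → Θ) (x y : TT Xv Θ) : TT Xv Θ :=
  ebp gf ib (nabP gs nab iph x.1 (decP gs ib y))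
  + ebm gf ib (nabM gs nab iph x.1 (decM gs ib y))

/-- The de Rham differential on functions, as data. -/
structure IsDifferential (act : Xv → C → C) (ev : Θ → Xv → C) (dC : C → Θ) : Prop where
  formula : ∀ f X, ev (dC f) X = act X f

/-- The Lie derivative of 1-forms, as data. -/
structure IsLieDerivTheta (act : Xv → C → C) (lie : Xv → Xv → Xv) (ev : Θ → Xv → C)
    (LTh : Xv → Θ → Θ) : Prop where
  formula : ∀ X η Y, ev (LTh X η) Y = act X (ev η Y) - ev η (lie X Y)

/-- The `γ`-twisted Dorfman bracket
`(X+ξ) *_γ (Y+η) = [X,Y] + L_X η − dι_Y ξ + ι_Yι_X γ` (with `ig X Y = ι_Yι_X γ`). -/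
def dorf (lie : Xv → Xv → Xv) (ev : Θ → Xv → C) (dC : C → Θ) (LTh : Xv → Θ → Θ)
    (ig : Xv → Xv → Θ) (x y : TT Xv Θ) : TT Xv Θ :=
  (lie x.1 y.1, LTh x.1 y.2 - dC (ev x.2 y.1) + ig x.1 y.1)

/-- Closedness `dγ = 0` of a 3-form given by its interior products. -/
def Closed3 (act : Xv → C → C) (lie : Xv → Xv → Xv) (ev : Θ → Xv → C)
    (ig : Xv → Xv → Θ) : Prop :=
  ∀ X Y Z W,
    act X (ev (ig Y Z) W) - act Y (ev (ig X Z) W) + act Z (ev (ig X Y) W)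
      - act W (ev (ig X Y) Z)
      - ev (ig (lie X Y) Z) W + ev (ig (lie X Z) Y) W - ev (ig (lie X W) Y) Z
      - ev (ig (lie Y Z) X) W + ev (ig (lie Y W) X) Z - ev (ig (lie Z W) X) Y = 0

/-- The scalar exterior differential `db(X,Y,Z)` of the 2-form `b`. -/
def dbScalar (act : Xv → C → C) (lie : Xv → Xv → Xv) (ev : Θ → Xv → C)
    (ib : Xv → Θ) (X Y Z : Xv) : C :=
  act X (bsc ev ib Y Z) - act Y (bsc ev ib X Z) + act Z (bsc ev ib X Y)
    - bsc ev ib (lie X Y) Z + bsc ev ib (lie X Z) Y - bsc ev ib (lie Y Z) X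

/-- `φ = γ + db` at the level of scalar 3-forms. -/
def PhiEqGammaPlusDb (act : Xv → C → C) (lie : Xv → Xv → Xv) (ev : Θ → Xv → C)
    (ib : Xv → Θ) (ig iph : Xv → Xv → Θ) : Prop :=
  ∀ X Y Z, ev (iph X Y) Z = ev (ig X Y) Z + dbScalar act lie ev ib X Y Z

/-- Metric compatibility of a `G^b`-metric connection with the Dorfman bracket `*_γ`:
the diamond bracket coincides with `*_γ` on mixed `G^b`-eigensections. -/
def MetricCompatDorfman (lie : Xv → Xv → Xv) (ev : Θ → Xv → C) (dC : C → Θ)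
    (LTh : Xv → Θ → Θ) (ig : Xv → Xv → Θ) (gf ib : Xv → Θ)
    (D : TT Xv Θ → TT Xv Θ → TT Xv Θ) : Prop :=
  ∀ X Y : Xv,
    diamond D (ebp gf ib X) (ebm gf ib Y) = dorf lie ev dC LTh ig (ebp gf ib X) (ebm gf ib Y)

/-- The curvature `ℱ^𝕋_{x,y}(D) = D_x D_y − D_y D_x − D_{x ◇_𝕋 y}` of a generalized
connection `DV` on `V`, with respect to a generalized connection `DT` on `𝕋M`. -/
def curvOn {V : Type} [AddCommGroup V]
    (DT : TT Xv Θ → TT Xv Θ → TT Xv Θ) (DV : TT Xv Θ → V → V)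
    (x y : TT Xv Θ) (v : V) : V :=
  DV x (DV y v) - DV y (DV x v) - DV (diamond DT x y) v

/-- A (global) `g`-orthonormal frame. -/
structure IsONFrame (ev : Θ → Xv → C) (gf : Xv → Θ) {n : ℕ} (e : Fin n → Xv) : Prop where
  ortho : ∀ i j, ev (gf (e i)) (e j) = if i = j then 1 else 0
  complete : ∀ X : Xv, X = ∑ i, gsc ev gf X (e i) • e i

/-- The `(φ,b)`-Ricci curvature operator
`ℛic^{φ,b}(x) = Σ_i [ℛ^{φ,b}_{x,e_i^{b+}} e_i^{b+} + ℛ^{φ,b}_{x,e_i^{b−}} e_i^{b−}]`. -/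
def RicPhib (gf : Xv → Θ) (gs : Θ → Xv) (ib : Xv → Θ) (nab : Xv → Xv → Xv)
    (iph : Xv → Xv → Θ) {n : ℕ} (e : Fin n → Xv) (x : TT Xv Θ) : TT Xv Θ :=
  ∑ i, (curvOn (Dphib gf gs ib nab iph) (Dphib gf gs ib nab iph)
          x (ebp gf ib (e i)) (ebp gf ib (e i))
        + curvOn (Dphib gf gs ib nab iph) (Dphib gf gs ib nab iph)
          x (ebm gf ib (e i)) (ebm gf ib (e i)))

end Core

end GenGeom

end


namespace GGAux

lemma succAbove_val {n : ℕ} (j : Fin (n+1)) (i : Fin n) :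
    ((j.succAbove i : Fin (n+1)) : ℕ) = if (i:ℕ) < (j:ℕ) then (i:ℕ) else (i:ℕ)+1 := by
  unfold Fin.succAbove
  split_ifs with h1 h2 h2
  · rfl
  · exact absurd (show (i:ℕ) < (j:ℕ) from by simpa [Fin.lt_def] using h1) h2
  · exact absurd (show Fin.castSucc i < j from by simpa [Fin.lt_def] using h2) h1
  · rfl

lemma predAbove_val {n : ℕ} (i : Fin n) (j : Fin (n+1)) :
    ((i.predAbove j : Fin n) : ℕ) = if (i:ℕ) < (j:ℕ) then (j:ℕ)-1 else (j:ℕ) := by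
  unfold Fin.predAbove
  split_ifs with h1 h2 h2
  · simp [Fin.coe_pred]
  · exact absurd (show (i:ℕ) < (j:ℕ) from by simpa [Fin.lt_def] using h1) h2
  · exact absurd (show Fin.castSucc i < j from by simpa [Fin.lt_def] using h2) h1
  · simp [Fin.coe_castPred]

lemma c1 {n : ℕ} (j : Fin (n+1)) (i : Fin n) :
    (j.succAbove i).succAbove (i.predAbove j) = j := by
  have hi := i.isLt; have hj := j.isLt
  apply Fin.ext
  simp only [succAbove_val, predAbove_val]
  split_ifs <;> omega

lemma c3b {n : ℕ} (j : Fin (n+1)) (i : Fin n) :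
    (i.predAbove j).predAbove (j.succAbove i) = i := by
  have hi := i.isLt; have hj := j.isLt
  apply Fin.ext
  simp only [succAbove_val, predAbove_val]
  split_ifs <;> omega

lemma c2 {n : ℕ} (j : Fin (n+2)) (l : Fin (n+1)) (m : Fin n) :
    j.succAbove (l.succAbove m) = (j.succAbove l).succAbove ((l.predAbove j).succAbove m) := by
  have hm := m.isLt; have hl := l.isLt; have hj := j.isLt
  apply Fin.ext
  simp only [succAbove_val, predAbove_val]
  split_ifs <;> omega

lemma c4 {n : ℕ} (j : Fin (n+1)) (i : Fin n) :
    ((-1:ℤ)^(((j.succAbove i : Fin (n+1)) : ℕ) + ((i.predAbove j : Fin n) : ℕ)))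
      = -(-1:ℤ)^((j:ℕ)+(i:ℕ)) := by
  have hi := i.isLt; have hj := j.isLt
  set p := ((j.succAbove i : Fin (n+1)) : ℕ) with hp
  set m := ((i.predAbove j : Fin n) : ℕ) with hm
  have h : p + m + 1 = (j:ℕ)+(i:ℕ) ∨ p + m = (j:ℕ)+(i:ℕ)+1 := by
    rw [hp, hm]; simp only [succAbove_val, predAbove_val]; split_ifs <;> omega
  rcases h with h | h
  · rw [← h, pow_succ]; ring
  · rw [h, pow_succ]; ring

end GGAux

namespace GGAux

open Function

lemma removeNth_apply {n : ℕ} {α : Type*} (p : Fin (n+1)) (f : Fin (n+1) → α) (i : Fin n) :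
    p.removeNth f i = f (p.succAbove i) := rfl

lemma removeNth_zero_cons {n : ℕ} {β : Type*} (x : β) (v : Fin n → β) :
    (0 : Fin (n+1)).removeNth (Fin.cons x v : Fin (n+1) → β) = v := by
  funext m
  rw [removeNth_apply, Fin.zero_succAbove, Fin.cons_succ]

lemma removeNth_succ_cons {n : ℕ} {β : Type*} (j : Fin (n+1)) (x : β) (v : Fin (n+1) → β) :
    (Fin.succ j).removeNth (Fin.cons x v : Fin (n+2) → β)
      = (Fin.cons x (j.removeNth v) : Fin (n+1) → β) := by
  funext m
  rw [removeNth_apply]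
  rcases Fin.eq_zero_or_eq_succ m with rfl | ⟨m', rfl⟩
  · rw [Fin.succ_succAbove_zero, Fin.cons_zero, Fin.cons_zero]
  · rw [Fin.succ_succAbove_succ, Fin.cons_succ, Fin.cons_succ, removeNth_apply]

lemma update_cons_succ {n : ℕ} {β : Type*} (j : Fin n) (x z : β) (u : Fin n → β) :
    Function.update (Fin.cons x u : Fin (n+1) → β) (Fin.succ j) z
      = (Fin.cons x (Function.update u j z) : Fin (n+1) → β) := by
  funext m
  rcases Fin.eq_zero_or_eq_succ m with rfl | ⟨m', rfl⟩
  · rw [Function.update_apply, if_neg (Fin.succ_ne_zero j).symm, Fin.cons_zero, Fin.cons_zero]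
  · rw [Function.update_apply, Fin.cons_succ, Fin.cons_succ, Function.update_apply]
    simp [Fin.succ_inj]

lemma removeNth_update_of_ne {n : ℕ} {β : Type*} (l : Fin (n+1)) (m : Fin n) (i : Fin (n+1))
    (h : l.succAbove m = i) (v : Fin (n+1) → β) (z : β) :
    l.removeNth (Function.update v i z) = Function.update (l.removeNth v) m z := by
  funext r
  rw [removeNth_apply]
  rcases eq_or_ne r m with rfl | hr
  · rw [Function.update_apply, if_pos h, Function.update_apply, if_pos rfl]
  · have h2 : l.succAbove r ≠ i := by
      rw [← h]; exact fun hc => hr (Fin.succAbove_right_injective hc)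
    rw [Function.update_apply, if_neg h2, Function.update_apply, if_neg hr, removeNth_apply]

def pairInv (n : ℕ) : Fin (n+1) × Fin n → Fin (n+1) × Fin n :=
  fun z => (z.1.succAbove z.2, z.2.predAbove z.1)

lemma pairInv_involutive (n : ℕ) : Function.Involutive (pairInv n) := by
  intro z
  simp only [pairInv, c1, c3b]

lemma pair_sum {n : ℕ} {M : Type*} [AddCommMonoid M] (B : Fin (n+1) → Fin n → M) :
    ∑ j : Fin (n+1), ∑ i : Fin n, B j i
      = ∑ j : Fin (n+1), ∑ i : Fin n, B (j.succAbove i) (i.predAbove j) := by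
  have h1 : ∑ z : Fin (n+1) × Fin n, B z.1 z.2 = ∑ j : Fin (n+1), ∑ i : Fin n, B j i :=
    Fintype.sum_prod_type (f := fun z : Fin (n+1) × Fin n => B z.1 z.2)
  have h2 : ∑ z : Fin (n+1) × Fin n, B (z.1.succAbove z.2) (z.2.predAbove z.1)
      = ∑ j : Fin (n+1), ∑ i : Fin n, B (j.succAbove i) (i.predAbove j) :=
    Fintype.sum_prod_type (f := fun z : Fin (n+1) × Fin n => B (z.1.succAbove z.2) (z.2.predAbove z.1))
  rw [← h1, ← h2]
  exact (Equiv.sum_comp (Function.Involutive.toPerm _ (pairInv_involutive n))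
    (fun z : Fin (n+1) × Fin n => B z.1 z.2)).symm

end GGAux

namespace GGAux

lemma removeNth_removeNth_pair {n : ℕ} {β : Type*} (j : Fin (n+2)) (l : Fin (n+1))
    (v : Fin (n+2) → β) :
    (l.predAbove j).removeNth ((j.succAbove l).removeNth v) = l.removeNth (j.removeNth v) := by
  funext m
  show v ((j.succAbove l).succAbove ((l.predAbove j).succAbove m)) = v (j.succAbove (l.succAbove m))
  exact congrArg v (c2 j l m).symm

end GGAux

namespace GenGeom

section Ops

set_option linter.unusedSectionVars false

variable {C : Type} [CommRing C] [Algebra ℝ C]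
variable {Xv : Type} [AddCommGroup Xv] [Module C Xv] [Module ℝ Xv] [IsScalarTower ℝ C Xv]
variable {Θ : Type} [AddCommGroup Θ] [Module C Θ] [Module ℝ Θ] [IsScalarTower ℝ C Θ]

open GGAux Finset

/-- act as an additive hom in the function argument. -/
def actH (act : Xv → C → C) {lie : Xv → Xv → Xv} (hds : IsDiffStructure act lie) (Z : Xv) :
    C →+ C :=
  AddMonoidHom.mk' (act Z) (fun a b => hds.act_add_right Z a b)

variable {act : Xv → C → C} {lie : Xv → Xv → Xv}

lemma act_zero' (hds : IsDiffStructure act lie) (Z : Xv) : act Z 0 = 0 := by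
  have h := hds.act_const Z 0
  simpa using h

lemma act_one' (hds : IsDiffStructure act lie) (Z : Xv) : act Z 1 = 0 := by
  have h := hds.act_const Z 1
  simpa using h

lemma act_sum' (hds : IsDiffStructure act lie) (Z : Xv) {ι : Type*} (s : Finset ι) (g : ι → C) :
    act Z (∑ i ∈ s, g i) = ∑ i ∈ s, act Z (g i) :=
  map_sum (actH act hds Z) g s

lemma act_sub' (hds : IsDiffStructure act lie) (Z : Xv) (a b : C) :
    act Z (a - b) = act Z a - act Z b :=
  map_sub (actH act hds Z) a b

lemma act_neg' (hds : IsDiffStructure act lie) (Z : Xv) (a : C) :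
    act Z (-a) = - act Z a :=
  map_neg (actH act hds Z) a

lemma act_zsmul' (hds : IsDiffStructure act lie) (Z : Xv) (n : ℤ) (a : C) :
    act Z (n • a) = n • act Z a :=
  map_zsmul (actH act hds Z) n a

lemma act_sub_left' (hds : IsDiffStructure act lie) (a b : Xv) (f : C) :
    act (a - b) f = act a f - act b f := by
  have h := hds.act_add_left b (a - b) f
  rw [add_sub_cancel] at h
  rw [h]; ring

lemma zpow_succ_smul {A : Type*} [AddCommGroup A] (i : ℕ) (c : A) :
    ((-1:ℤ)^(i+1)) • c = -(((-1:ℤ)^i) • c) := by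
  rw [pow_succ, mul_smul, neg_one_zsmul, smul_neg]

/-- `df ∧ θ`. -/
def muW (act : Xv → C → C) (f : C) {k : ℕ} (θ : Wform C Xv Θ k) : Wform C Xv Θ (k+1) :=
  fun v => ∑ i : Fin (k+1), ((-1:ℤ)^(i:ℕ)) • (act (v i).1 f * θ (i.removeNth v))

/-- `ι_{D_• x} df ∧ θ`-type operator. -/
def xiW (act : Xv → C → C) (D : TT Xv Θ → TT Xv Θ → TT Xv Θ) (x : TT Xv Θ) (f : C) {k : ℕ}
    (θ : Wform C Xv Θ k) : Wform C Xv Θ (k+1) :=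
  fun v => ∑ i : Fin (k+1), ((-1:ℤ)^(i:ℕ)) • (act (D (v i) x).1 f * θ (i.removeNth v))

/-- second-derivative defect operator. -/
def nuW (act : Xv → C → C) (D : TT Xv Θ → TT Xv Θ → TT Xv Θ) (x : TT Xv Θ) (f : C) {k : ℕ}
    (θ : Wform C Xv Θ k) : Wform C Xv Θ (k+1) :=
  fun v => ∑ i : Fin (k+1),
    ((-1:ℤ)^(i:ℕ)) • ((act x.1 (act (v i).1 f) - act (D x (v i)).1 f) * θ (i.removeNth v))

/-- contraction with first slot. -/
def ioW (x : TT Xv Θ) {k : ℕ} (θ : Wform C Xv Θ (k+1)) : Wform C Xv Θ k :=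
  fun v => θ (Fin.cons x v)

/-- the correction operator in the Cartan-type formula. -/
def jxW (D : TT Xv Θ → TT Xv Θ → TT Xv Θ) (x : TT Xv Θ) {k : ℕ}
    (θ : Wform C Xv Θ (k+1)) : Wform C Xv Θ (k+1) :=
  fun v => ∑ i : Fin (k+1), ((-1:ℤ)^(i:ℕ)) • θ (Fin.cons (D (v i) x) (i.removeNth v))

variable {D : TT Xv Θ → TT Xv Θ → TT Xv Θ}

lemma cd_add (hds : IsDiffStructure act lie) (x : TT Xv Θ) {k : ℕ} (θ θ' : Wform C Xv Θ k) :
    covDG act D x (θ + θ') = covDG act D x θ + covDG act D x θ' := by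
  funext v
  simp only [covDG, Pi.add_apply, hds.act_add_right, Finset.sum_add_distrib]
  ring

lemma cd_zero (hds : IsDiffStructure act lie) (x : TT Xv Θ) {k : ℕ} :
    covDG act D x (0 : Wform C Xv Θ k) = 0 := by
  funext v
  simp only [covDG, Pi.zero_apply, act_zero' hds, Finset.sum_const_zero, sub_zero]

lemma cd_neg (hds : IsDiffStructure act lie) (x : TT Xv Θ) {k : ℕ} (θ : Wform C Xv Θ k) :
    covDG act D x (-θ) = - covDG act D x θ := by
  funext v
  simp only [covDG, Pi.neg_apply, act_neg' hds, Finset.sum_neg_distrib]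
  ring

lemma cd_smul (hds : IsDiffStructure act lie) (x : TT Xv Θ) {k : ℕ} (f : C) (θ : Wform C Xv Θ k) :
    covDG act D x (f • θ) = act x.1 f • θ + f • covDG act D x θ := by
  funext v
  simp only [covDG, Pi.add_apply, Pi.smul_apply, smul_eq_mul, hds.act_mul_right,
    ← Finset.mul_sum]
  ring

lemma d_add (hds : IsDiffStructure act lie) {k : ℕ} (θ θ' : Wform C Xv Θ k) :
    dTG act D (θ + θ') = dTG act D θ + dTG act D θ' := by
  funext v
  simp only [dTG, cd_add hds, Pi.add_apply, smul_add, Finset.sum_add_distrib]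

lemma d_zero (hds : IsDiffStructure act lie) {k : ℕ} : dTG act D (0 : Wform C Xv Θ k) = 0 := by
  funext v
  simp only [dTG, cd_zero hds, Pi.zero_apply, smul_zero, Finset.sum_const_zero]

lemma d_neg (hds : IsDiffStructure act lie) {k : ℕ} (θ : Wform C Xv Θ k) : dTG act D (-θ) = - dTG act D θ := by
  funext v
  simp only [dTG, cd_neg hds, Pi.neg_apply, smul_neg, Finset.sum_neg_distrib]

lemma d_smul (hds : IsDiffStructure act lie) {k : ℕ} (f : C) (θ : Wform C Xv Θ k) :
    dTG act D (f • θ) = muW act f θ + f • dTG act D θ := by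
  funext v
  simp only [dTG, cd_smul hds, muW, Pi.add_apply, Pi.smul_apply, smul_eq_mul, smul_add,
    Finset.sum_add_distrib, Finset.mul_sum, mul_smul_comm]

lemma mu_add (hds : IsDiffStructure act lie) (f : C) {k : ℕ} (θ θ' : Wform C Xv Θ k) :
    muW act f (θ + θ') = muW act f θ + muW act f θ' := by
  funext v
  simp only [muW, Pi.add_apply, mul_add, smul_add, Finset.sum_add_distrib]

lemma mu_sub (hds : IsDiffStructure act lie) (f : C) {k : ℕ} (θ θ' : Wform C Xv Θ k) :
    muW act f (θ - θ') = muW act f θ - muW act f θ' := by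
  funext v
  simp only [muW, Pi.sub_apply, mul_sub, smul_sub, Finset.sum_sub_distrib]

lemma cd_cons (hds : IsDiffStructure act lie) (y x : TT Xv Θ) {k : ℕ}
    (θ : Wform C Xv Θ (k+1)) (u : Fin k → TT Xv Θ) :
    covDG act D y θ (Fin.cons x u) = covDG act D y (ioW x θ) u - θ (Fin.cons (D y x) u) := by
  simp only [covDG, ioW, Fin.sum_univ_succ, Fin.update_cons_zero, update_cons_succ,
    Fin.cons_succ, Fin.cons_zero]
  ring

lemma cartan0 (hds : IsDiffStructure act lie) (x : TT Xv Θ) (θ : Wform C Xv Θ 0) :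
    ioW x (dTG act D θ) = covDG act D x θ := by
  funext v
  simp only [ioW, dTG, Fin.sum_univ_succ, Fin.sum_univ_zero, add_zero, Fin.cons_zero,
    removeNth_zero_cons, Fin.val_zero, pow_zero, one_smul]

lemma cartan (hds : IsDiffStructure act lie) (x : TT Xv Θ) {k : ℕ}
    (θ : Wform C Xv Θ (k+1)) :
    ioW x (dTG act D θ)
      = covDG act D x θ - dTG act D (ioW x θ) + jxW D x θ := by
  funext v
  simp only [ioW, dTG, jxW, Pi.add_apply, Pi.sub_apply, Fin.sum_univ_succ, Fin.cons_zero,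
    Fin.cons_succ, removeNth_zero_cons, removeNth_succ_cons, Fin.val_zero, pow_zero, one_smul,
    Fin.val_succ, zpow_succ_smul, cd_cons hds, smul_sub, Finset.sum_sub_distrib,
    Finset.sum_neg_distrib]
  ring

lemma io_mu0 (x : TT Xv Θ) (f : C) (θ : Wform C Xv Θ 0) :
    ioW x (muW act f θ) = act x.1 f • θ := by
  funext v
  simp only [ioW, muW, Fin.sum_univ_succ, Fin.sum_univ_zero, add_zero, Fin.cons_zero,
    removeNth_zero_cons, Fin.val_zero, pow_zero, one_smul, Pi.smul_apply, smul_eq_mul]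

lemma io_mu (x : TT Xv Θ) (f : C) {k : ℕ} (θ : Wform C Xv Θ (k+1)) :
    ioW x (muW act f θ) = act x.1 f • θ - muW act f (ioW x θ) := by
  funext v
  simp only [ioW, muW, Pi.sub_apply, Pi.smul_apply, smul_eq_mul, Fin.sum_univ_succ,
    Fin.cons_zero, Fin.cons_succ, removeNth_zero_cons, removeNth_succ_cons, Fin.val_zero,
    pow_zero, one_smul, Fin.val_succ, zpow_succ_smul, Finset.sum_neg_distrib]
  ring

lemma cd_mu (hds : IsDiffStructure act lie) (x : TT Xv Θ) (f : C) {k : ℕ}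
    (θ : Wform C Xv Θ k) :
    covDG act D x (muW act f θ)
      = muW act f (covDG act D x θ) + nuW act D x f θ := by
  funext v
  have h1 : act x.1 (muW act f θ v)
      = (∑ i : Fin (k+1), ((-1:ℤ)^(i:ℕ)) • (act (v i).1 f * act x.1 (θ (i.removeNth v))))
        + ∑ i : Fin (k+1), ((-1:ℤ)^(i:ℕ)) • (act x.1 (act (v i).1 f) * θ (i.removeNth v)) := by
    rw [muW, act_sum' hds]
    rw [← Finset.sum_add_distrib]
    refine Finset.sum_congr rfl (fun i _ => ?_)
    rw [act_zsmul' hds, hds.act_mul_right, smul_add]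
    ring_nf
  have h2 : ∀ j : Fin (k+1), muW act f θ (Function.update v j (D x (v j)))
      = ((-1:ℤ)^(j:ℕ)) • (act (D x (v j)).1 f * θ (j.removeNth v))
        + ∑ i' : Fin k, ((-1:ℤ)^((j.succAbove i' : Fin (k+1)):ℕ)) •
            (act (v (j.succAbove i')).1 f
              * θ (Function.update ((j.succAbove i').removeNth v) (i'.predAbove j) (D x (v j)))) := by
    intro j
    rw [muW, Fin.sum_univ_succAbove _ j]
    congr 1
    · rw [Function.update_self, Fin.removeNth_update]
    · refine Finset.sum_congr rfl (fun i' _ => ?_)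
      rw [Function.update_of_ne (Fin.succAbove_ne j i'),
        removeNth_update_of_ne _ _ _ (c1 j i')]
  have h3 : ∑ j : Fin (k+1), ∑ i' : Fin k, ((-1:ℤ)^((j.succAbove i' : Fin (k+1)):ℕ)) •
        (act (v (j.succAbove i')).1 f
          * θ (Function.update ((j.succAbove i').removeNth v) (i'.predAbove j) (D x (v j))))
      = ∑ j : Fin (k+1), ∑ i' : Fin k, ((-1:ℤ)^((j:Fin (k+1)):ℕ)) •
        (act (v j).1 f
          * θ (Function.update (j.removeNth v) i' (D x (v (j.succAbove i'))))) := by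
    rw [pair_sum (fun (j : Fin (k+1)) (i' : Fin k) => ((-1:ℤ)^((j:Fin (k+1)):ℕ)) •
        (act (v j).1 f * θ (Function.update (j.removeNth v) i' (D x (v (j.succAbove i'))))))]
    refine Finset.sum_congr rfl (fun j _ => Finset.sum_congr rfl (fun i' _ => ?_))
    rw [c1 j i']
  show act x.1 (muW act f θ v) - ∑ j : Fin (k+1), muW act f θ (Function.update v j (D x (v j)))
      = muW act f (covDG act D x θ) v + nuW act D x f θ v
  rw [h1, Finset.sum_congr rfl (fun j _ => h2 j), Finset.sum_add_distrib, h3]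
  have h4 : muW act f (covDG act D x θ) v
      = (∑ i : Fin (k+1), ((-1:ℤ)^(i:ℕ)) • (act (v i).1 f * act x.1 (θ (i.removeNth v))))
        - ∑ j : Fin (k+1), ∑ i' : Fin k, ((-1:ℤ)^((j:Fin (k+1)):ℕ)) •
        (act (v j).1 f
          * θ (Function.update (j.removeNth v) i' (D x (v (j.succAbove i'))))) := by
    rw [muW, ← Finset.sum_sub_distrib]
    refine Finset.sum_congr rfl (fun j _ => ?_)
    rw [covDG]
    rw [mul_sub, Finset.mul_sum, smul_sub, Finset.smul_sum]
    rfl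
  have h5 : nuW act D x f θ v
      = (∑ i : Fin (k+1), ((-1:ℤ)^(i:ℕ)) • (act x.1 (act (v i).1 f) * θ (i.removeNth v)))
        - ∑ i : Fin (k+1), ((-1:ℤ)^(i:ℕ)) • (act (D x (v i)).1 f * θ (i.removeNth v)) := by
    rw [nuW, ← Finset.sum_sub_distrib]
    refine Finset.sum_congr rfl (fun i _ => ?_)
    rw [sub_mul, smul_sub]
  rw [h4, h5]
  ring

lemma jx_mu0 (x : TT Xv Θ) (f : C) (θ : Wform C Xv Θ 0) :
    jxW D x (muW act f θ) = xiW act D x f θ := by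
  funext v
  simp only [jxW, muW, xiW, Fin.sum_univ_succ, Fin.sum_univ_zero, add_zero, Fin.cons_zero,
    removeNth_zero_cons, Fin.val_zero, pow_zero, one_smul]

lemma jx_mu (hds : IsDiffStructure act lie) (x : TT Xv Θ) (f : C) {k : ℕ}
    (θ : Wform C Xv Θ (k+1)) :
    jxW D x (muW act f θ) = xiW act D x f θ + muW act f (jxW D x θ) := by
  funext v
  have hinner : ∀ j : Fin (k+2), muW act f θ (Fin.cons (D (v j) x) (j.removeNth v))
      = act (D (v j) x).1 f * θ (j.removeNth v)
        - ∑ l' : Fin (k+1), ((-1:ℤ)^(l':ℕ)) • (act (v (j.succAbove l')).1 f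
            * θ (Fin.cons (D (v j) x) (l'.removeNth (j.removeNth v)))) := by
    intro j
    rw [muW, Fin.sum_univ_succ]
    simp only [Fin.cons_zero, Fin.cons_succ, removeNth_zero_cons, removeNth_succ_cons,
      Fin.val_zero, pow_zero, one_smul, Fin.val_succ, zpow_succ_smul, removeNth_apply,
      Finset.sum_neg_distrib]
    ring
  have hcross : ∑ j : Fin (k+2), ((-1:ℤ)^(j:ℕ)) • ∑ l' : Fin (k+1), ((-1:ℤ)^(l':ℕ)) •
        (act (v (j.succAbove l')).1 f * θ (Fin.cons (D (v j) x) (l'.removeNth (j.removeNth v))))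
      = - ∑ i : Fin (k+2), ((-1:ℤ)^(i:ℕ)) • (act (v i).1 f * jxW D x θ (i.removeNth v)) := by
    have lhs_eq : ∑ j : Fin (k+2), ((-1:ℤ)^(j:ℕ)) • ∑ l' : Fin (k+1), ((-1:ℤ)^(l':ℕ)) •
          (act (v (j.succAbove l')).1 f * θ (Fin.cons (D (v j) x) (l'.removeNth (j.removeNth v))))
        = ∑ j : Fin (k+2), ∑ l' : Fin (k+1), ((-1:ℤ)^((j:ℕ)+(l':ℕ))) •
          (act (v (j.succAbove l')).1 f
            * θ (Fin.cons (D (v j) x) (l'.removeNth (j.removeNth v)))) := by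
      refine Finset.sum_congr rfl (fun j _ => ?_)
      rw [Finset.smul_sum]
      refine Finset.sum_congr rfl (fun l' _ => ?_)
      rw [smul_smul, ← pow_add]
    have rhs_eq : ∑ i : Fin (k+2), ((-1:ℤ)^(i:ℕ)) • (act (v i).1 f * jxW D x θ (i.removeNth v))
        = ∑ i : Fin (k+2), ∑ j' : Fin (k+1), ((-1:ℤ)^((i:ℕ)+(j':ℕ))) •
          (act (v i).1 f
            * θ (Fin.cons (D (v (i.succAbove j')) x) (j'.removeNth (i.removeNth v)))) := by
      refine Finset.sum_congr rfl (fun i _ => ?_)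
      rw [jxW, Finset.mul_sum, Finset.smul_sum]
      refine Finset.sum_congr rfl (fun j' _ => ?_)
      rw [mul_smul_comm, smul_smul, ← pow_add]
      rfl
    rw [lhs_eq, rhs_eq]
    rw [pair_sum (fun (j : Fin (k+2)) (l' : Fin (k+1)) => ((-1:ℤ)^((j:ℕ)+(l':ℕ))) •
          (act (v (j.succAbove l')).1 f
            * θ (Fin.cons (D (v j) x) (l'.removeNth (j.removeNth v)))))]
    rw [← Finset.sum_neg_distrib]
    refine Finset.sum_congr rfl (fun j _ => ?_)
    rw [← Finset.sum_neg_distrib]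
    refine Finset.sum_congr rfl (fun l' _ => ?_)
    rw [c4, c1, removeNth_removeNth_pair, neg_smul]
  show (∑ j : Fin (k+2), ((-1:ℤ)^(j:ℕ)) • muW act f θ (Fin.cons (D (v j) x) (j.removeNth v))) = _
  rw [Finset.sum_congr rfl (fun j _ => congrArg (fun c => ((-1:ℤ)^((j : Fin (k+2)):ℕ)) • c) (hinner j))]
  simp only [smul_sub, Finset.sum_sub_distrib, hcross]
  show (xiW act D x f θ v) - - (muW act f (jxW D x θ) v) = (xiW act D x f θ + muW act f (jxW D x θ)) v
  rw [sub_neg_eq_add, Pi.add_apply]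

lemma nu_tf (hds : IsDiffStructure act lie) (hTF : TorsionFree lie D)
    (x : TT Xv Θ) (f : C) {k : ℕ} (θ : Wform C Xv Θ k) :
    nuW act D x f θ = muW act (act x.1 f) θ - xiW act D x f θ := by
  funext v
  simp only [nuW, muW, xiW, Pi.sub_apply]
  rw [← Finset.sum_sub_distrib]
  refine Finset.sum_congr rfl (fun i _ => ?_)
  rw [← smul_sub]
  have h1 : (D x (v i)).1 - (D (v i) x).1 = lie x.1 (v i).1 := by
    have h := hTF x (v i)
    rw [diamond] at h
    rw [← h]
    simp
  have h2 : act ((D x (v i)).1 - (D (v i) x).1) f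
      = act (D x (v i)).1 f - act (D (v i) x).1 f := act_sub_left' hds _ _ _
  rw [h1] at h2
  have h3 := hds.lie_act x.1 (v i).1 f
  rw [h3] at h2
  refine congrArg (fun c => ((-1:ℤ)^((i : Fin (k+1)):ℕ)) • c) ?_
  linear_combination (θ (i.removeNth v)) * h2

lemma ext_io {k : ℕ} (θ : Wform C Xv Θ (k+1)) (h : ∀ x, ioW x θ = 0) : θ = 0 := by
  funext v
  have h2 := congrFun (h (v 0)) (Fin.tail v)
  rw [ioW] at h2
  rw [← Fin.cons_self_tail v]
  exact h2

lemma io_add (x : TT Xv Θ) {k : ℕ} (θ θ' : Wform C Xv Θ (k+1)) :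
    ioW x (θ + θ') = ioW x θ + ioW x θ' := rfl

lemma d_sub (hds : IsDiffStructure act lie) {k : ℕ} (θ θ' : Wform C Xv Θ k) :
    dTG act D (θ - θ') = dTG act D θ - dTG act D θ' := by
  rw [sub_eq_add_neg, d_add hds, d_neg hds, sub_eq_add_neg]

lemma Eid (hds : IsDiffStructure act lie) (hTF : TorsionFree lie D) :
    ∀ {k : ℕ} (f : C) (θ : Wform C Xv Θ k),
      dTG act D (muW act f θ) + muW act f (dTG act D θ) = 0 := by
  intro k
  induction k with
  | zero =>
    intro f θ
    apply ext_io
    intro x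
    rw [io_add, cartan hds x (muW act f θ), io_mu x f (dTG act D θ), cartan0 hds x θ,
      cd_mu hds, io_mu0, d_smul hds, jx_mu0, nu_tf hds hTF]
    abel
  | succ k ih =>
    intro f θ
    apply ext_io
    intro x
    rw [io_add, cartan hds x (muW act f θ), io_mu x f (dTG act D θ), cartan hds x θ,
      cd_mu hds, io_mu x f θ, d_sub hds, d_smul hds, jx_mu hds, nu_tf hds hTF]
    simp only [mu_add hds, mu_sub hds]
    have hih := ih f (ioW x θ)
    have h4 : dTG act D (muW act f (ioW x θ)) = - muW act f (dTG act D (ioW x θ)) :=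
      eq_neg_of_add_eq_zero_left hih
    rw [h4]
    abel

lemma dd_smul (hds : IsDiffStructure act lie) (hTF : TorsionFree lie D)
    {k : ℕ} (f : C) (θ : Wform C Xv Θ k) :
    dTG act D (dTG act D (f • θ)) = f • dTG act D (dTG act D θ) := by
  rw [d_smul hds, d_add hds, d_smul hds]
  have h := Eid hds hTF f θ
  have h2 : dTG act D (muW act f θ) = - muW act f (dTG act D θ) :=
    eq_neg_of_add_eq_zero_left h
  rw [h2]
  abel

/-- per-slot additivity and `C`-homogeneity. -/
def Multilin {k : ℕ} (θ : Wform C Xv Θ k) : Prop :=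
  (∀ (v : Fin k → TT Xv Θ) (i : Fin k) (x y : TT Xv Θ),
      θ (Function.update v i (x + y)) = θ (Function.update v i x) + θ (Function.update v i y)) ∧
  (∀ (v : Fin k → TT Xv Θ) (i : Fin k) (f : C) (x : TT Xv Θ),
      θ (Function.update v i (f • x)) = f * θ (Function.update v i x))

lemma cd_left_add (hds : IsDiffStructure act lie) (hD : IsGenConn act D)
    {k : ℕ} (θ : Wform C Xv Θ k) (hθ : Multilin θ) (x y : TT Xv Θ) :
    covDG act D (x + y) θ = covDG act D x θ + covDG act D y θ := by
  funext v
  simp only [covDG, Pi.add_apply, Prod.fst_add, hds.act_add_left, hD.add_left]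
  have hterm : ∀ i : Fin k, θ (Function.update v i (D x (v i) + D y (v i)))
      = θ (Function.update v i (D x (v i))) + θ (Function.update v i (D y (v i))) :=
    fun i => hθ.1 v i _ _
  rw [Finset.sum_congr rfl (fun i _ => hterm i), Finset.sum_add_distrib]
  ring

lemma cd_left_smul (hds : IsDiffStructure act lie) (hD : IsGenConn act D)
    {k : ℕ} (θ : Wform C Xv Θ k) (hθ : Multilin θ) (f : C) (x : TT Xv Θ) :
    covDG act D (f • x) θ = f • covDG act D x θ := by
  funext v
  simp only [covDG, Pi.smul_apply, smul_eq_mul, Prod.smul_fst, hds.act_smul_left, hD.smul_left]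
  have hterm : ∀ i : Fin k, θ (Function.update v i (f • D x (v i)))
      = f * θ (Function.update v i (D x (v i))) :=
    fun i => hθ.2 v i f _
  rw [Finset.sum_congr rfl (fun i _ => hterm i), ← Finset.mul_sum]
  ring

lemma cd_update_add (hD : IsGenConn act D) (hds : IsDiffStructure act lie)
    {k : ℕ} (θ : Wform C Xv Θ k) (hθ : Multilin θ) (y : TT Xv Θ)
    (w : Fin k → TT Xv Θ) (m : Fin k) (a b : TT Xv Θ) :
    covDG act D y θ (Function.update w m (a + b))
      = covDG act D y θ (Function.update w m a) + covDG act D y θ (Function.update w m b) := by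
  have hterm : ∀ j : Fin k,
      θ (Function.update (Function.update w m (a+b)) j (D y (Function.update w m (a+b) j)))
        = θ (Function.update (Function.update w m a) j (D y (Function.update w m a j)))
          + θ (Function.update (Function.update w m b) j (D y (Function.update w m b j))) := by
    intro j
    rcases eq_or_ne j m with rfl | hj
    · simp only [Function.update_self, Function.update_idem]
      rw [hD.add_right]
      exact hθ.1 w j _ _
    · have hju : ∀ c : TT Xv Θ, (Function.update w m c) j = w j :=
        fun c => Function.update_of_ne hj _ _
      rw [hju, hju, hju, Function.update_comm hj.symm, Function.update_comm hj.symm,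
        Function.update_comm hj.symm]
      exact hθ.1 (Function.update w j (D y (w j))) m a b
  simp only [covDG]
  rw [hθ.1 w m a b, hds.act_add_right, Finset.sum_congr rfl (fun j _ => hterm j),
    Finset.sum_add_distrib]
  ring

lemma cd_update_smul (hD : IsGenConn act D) (hds : IsDiffStructure act lie)
    {k : ℕ} (θ : Wform C Xv Θ k) (hθ : Multilin θ) (y : TT Xv Θ)
    (w : Fin k → TT Xv Θ) (m : Fin k) (f : C) (a : TT Xv Θ) :
    covDG act D y θ (Function.update w m (f • a))
      = f * covDG act D y θ (Function.update w m a) := by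
  have hterm : ∀ j : Fin k,
      θ (Function.update (Function.update w m (f • a)) j (D y (Function.update w m (f • a) j)))
        = (if j = m then act y.1 f * θ (Function.update w m a) else 0)
          + f * θ (Function.update (Function.update w m a) j (D y (Function.update w m a j))) := by
    intro j
    rcases eq_or_ne j m with rfl | hj
    · simp only [Function.update_self, Function.update_idem, eq_self_iff_true, if_true]
      rw [hD.leibniz, hθ.1 w j (act y.1 f • a) (f • D y a), hθ.2 w j (act y.1 f) a,
        hθ.2 w j f (D y a)]
    · have hju : ∀ c : TT Xv Θ, (Function.update w m c) j = w j :=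
        fun c => Function.update_of_ne hj _ _
      rw [if_neg hj, hju, hju, Function.update_comm hj.symm, Function.update_comm hj.symm,
        hθ.2 (Function.update w j (D y (w j))) m f a, zero_add]
  simp only [covDG]
  rw [hθ.2 w m f a, hds.act_mul_right, Finset.sum_congr rfl (fun j _ => hterm j),
    Finset.sum_add_distrib, Finset.sum_ite_eq' Finset.univ m
      (fun _ => act y.1 f * θ (Function.update w m a))]
  simp only [Finset.mem_univ, if_pos]
  rw [← Finset.mul_sum]
  ring

lemma d_multilin (hds : IsDiffStructure act lie) (hD : IsGenConn act D)
    {k : ℕ} {θ : Wform C Xv Θ k} (hθ : Multilin θ) : Multilin (dTG act D θ) := by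
  constructor
  · intro v i x y
    simp only [dTG]
    rw [← Finset.sum_add_distrib]
    refine Finset.sum_congr rfl (fun l _ => ?_)
    rcases eq_or_ne l i with rfl | hl
    · simp only [Function.update_self, Fin.removeNth_update]
      rw [cd_left_add hds hD θ hθ, Pi.add_apply, smul_add]
    · obtain ⟨m, hm⟩ := Fin.exists_succAbove_eq (Ne.symm hl)
      have hvl : ∀ c : TT Xv Θ, (Function.update v i c) l = v l :=
        fun c => Function.update_of_ne hl _ _
      rw [hvl, hvl, hvl, removeNth_update_of_ne l m i hm, removeNth_update_of_ne l m i hm,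
        removeNth_update_of_ne l m i hm, cd_update_add hD hds θ hθ, smul_add]
  · intro v i f x
    simp only [dTG]
    rw [Finset.mul_sum]
    refine Finset.sum_congr rfl (fun l _ => ?_)
    rcases eq_or_ne l i with rfl | hl
    · simp only [Function.update_self, Fin.removeNth_update]
      rw [cd_left_smul hds hD θ hθ, Pi.smul_apply, smul_eq_mul, mul_smul_comm]
    · obtain ⟨m, hm⟩ := Fin.exists_succAbove_eq (Ne.symm hl)
      have hvl : ∀ c : TT Xv Θ, (Function.update v i c) l = v l :=
        fun c => Function.update_of_ne hl _ _
      rw [hvl, hvl, removeNth_update_of_ne l m i hm, removeNth_update_of_ne l m i hm,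
        cd_update_smul hD hds θ hθ, mul_smul_comm]

lemma d_const (c : C) :
    dTG act D (fun _ : Fin 0 → TT Xv Θ => c) = fun w : Fin 1 → TT Xv Θ => act (w 0).1 c := by
  funext w
  simp only [dTG, covDG, Fin.sum_univ_succ, Fin.sum_univ_zero, add_zero, sub_zero,
    Fin.val_zero, pow_zero, one_smul]

lemma dd_const_eval (c : C) (v : Fin 2 → TT Xv Θ) :
    dTG act D (dTG act D (fun _ : Fin 0 → TT Xv Θ => c)) v
      = act (v 0).1 (act (v 1).1 c) - act ((D (v 0) (v 1)).1) c
        - (act (v 1).1 (act (v 0).1 c) - act ((D (v 1) (v 0)).1) c) := by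
  rw [d_const]
  have e1 : (0:Fin 2).succAbove 0 = 1 := by decide
  have e2 : (1:Fin 2).succAbove 0 = 0 := by decide
  simp only [dTG, covDG, Fin.sum_univ_succ, Fin.sum_univ_zero, add_zero,
    Fin.val_zero, pow_zero, one_smul, Fin.val_succ, zpow_succ_smul, zero_add, pow_one,
    neg_one_zsmul, removeNth_apply, Function.update_self, e1, e2, Fin.succ_zero_eq_one]
  ring

lemma mem_J_dd {k : ℕ} (θ : Wform C Xv Θ k) :
    dTG act D (dTG act D θ) ∈ JsubG C act D (k+2) := by
  rw [JsubG]
  exact Submodule.subset_span ⟨θ, rfl⟩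

lemma J_stable (hds : IsDiffStructure act lie) (hTF : TorsionFree lie D) :
    ∀ {k : ℕ} (ψ : Wform C Xv Θ k), ψ ∈ JsubG C act D k
      → dTG act D ψ ∈ JsubG C act D (k+1) := by
  intro k
  match k with
  | 0 =>
    intro ψ hψ
    have h0 : ψ = 0 := by simpa [JsubG] using hψ
    rw [h0, d_zero hds]
    exact Submodule.zero_mem _
  | 1 =>
    intro ψ hψ
    have h0 : ψ = 0 := by simpa [JsubG] using hψ
    rw [h0, d_zero hds]
    exact Submodule.zero_mem _
  | (k+2) =>
    intro ψ hψ
    rw [JsubG] at hψ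
    set S : Set (Wform C Xv Θ (k+2)) :=
      {ψ' | ∃ θ : Wform C Xv Θ k, ψ' = dTG act D (dTG act D θ)} with hS
    have hcl : ψ ∈ AddSubgroup.closure S := by
      refine Submodule.span_induction (fun a ha => AddSubgroup.subset_closure ha)
        (AddSubgroup.zero_mem _) (fun a b _ _ ha hb => AddSubgroup.add_mem _ ha hb)
        (fun f a _ ha => ?_) hψ
      refine AddSubgroup.closure_induction (fun b hb => ?_) ?_ ?_ ?_ ha
      · obtain ⟨θ, rfl⟩ := hb
        refine AddSubgroup.subset_closure ⟨f • θ, ?_⟩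
        rw [dd_smul hds hTF]
      · rw [smul_zero]; exact AddSubgroup.zero_mem _
      · intro a b _ _ ha hb
        rw [smul_add]; exact AddSubgroup.add_mem _ ha hb
      · intro a _ ha
        rw [smul_neg]; exact AddSubgroup.neg_mem _ ha
    refine AddSubgroup.closure_induction (fun b hb => ?_) ?_ ?_ ?_ hcl
    · obtain ⟨θ, rfl⟩ := hb
      exact mem_J_dd (dTG act D θ)
    · rw [d_zero hds]; exact Submodule.zero_mem _
    · intro a b _ _ ha hb
      rw [d_add hds]; exact Submodule.add_mem _ ha hb
    · intro a _ ha
      rw [d_neg hds]; exact Submodule.neg_mem _ ha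

lemma tf_of_ddconst (hds : IsDiffStructure act lie)
    (hyp : ∀ f : C, dTG act D (dTG act D (fun _ : Fin 0 → TT Xv Θ => f)) = 0) :
    TorsionFree lie D := by
  intro x y
  have h : ∀ f, act (lie x.1 y.1 - (diamond D x y).1) f = 0 := by
    intro f
    have h2 := congrFun (hyp f) ![x, y]
    rw [dd_const_eval] at h2
    simp only [Matrix.cons_val_zero, Matrix.cons_val_one, Matrix.head_cons, Pi.zero_apply] at h2
    rw [act_sub_left' hds, hds.lie_act]
    have h3 : (diamond D x y).1 = (D x y).1 - (D y x).1 := by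
      rw [diamond]; simp
    rw [h3, act_sub_left' hds]
    linear_combination h2
  have h4 := hds.act_faithful _ h
  have h5 := sub_eq_zero.mp h4
  exact h5.symm

lemma lift_wd (hds : IsDiffStructure act lie) (hTF : TorsionFree lie D)
    {k : ℕ} (a b : Wform C Xv Θ k)
    (hab : Submodule.quotientRel (JsubG C act D k) a b) :
    (Submodule.Quotient.mk (dTG act D a) :
        ((Fin (k+1) → TT Xv Θ) → C) ⧸ JsubG C act D (k+1))
      = Submodule.Quotient.mk (dTG act D b) := by
  have h : a - b ∈ JsubG C act D k := (Submodule.quotientRel_def _).mp hab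
  have h2 := J_stable hds hTF _ h
  rw [d_sub hds] at h2
  exact (Submodule.Quotient.eq _).mpr h2

end Ops

end GenGeom

namespace GenGeom

/-!
STATEMENT 0.  Let `D^𝕋` be a generalized connection on `𝕋M` and `d^𝕋` the induced
derivation on `𝕋M`-forms.  Then `d^𝕋 ∘ d^𝕋` is tensorial — i.e. for every `k` the
value `(d^𝕋(d^𝕋 θ))(x₀,…,x_{k+1})` is `C^∞(M)`-linear in `θ` and in each argument
`x_i` — if and only if `D^𝕋` is `TM`-torsion free.  In that case the quotient
`Ω̃*_𝕋(M)` of `Ω*_𝕋(M)` by the image of `d^𝕋 ∘ d^𝕋` is a cochain complex under the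
induced derivation `d̃^𝕋`, i.e. `d̃^𝕋 ∘ d̃^𝕋 = 0`.
-/
theorem stmt_0
    {C : Type} [CommRing C] [Algebra ℝ C]
    {Xv : Type} [AddCommGroup Xv] [Module C Xv] [Module ℝ Xv] [IsScalarTower ℝ C Xv]
    {Θ : Type} [AddCommGroup Θ] [Module C Θ] [Module ℝ Θ] [IsScalarTower ℝ C Θ]
    (act : Xv → C → C) (lie : Xv → Xv → Xv) (ev : Θ → Xv → C)
    (hds : IsDiffStructure act lie) (hev : IsEvStructure ev)
    (D : TT Xv Θ → TT Xv Θ → TT Xv Θ) (hD : IsGenConn act D) :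
    -- (1) `d^𝕋 ∘ d^𝕋` is tensorial iff `D^𝕋` is `TM`-torsion free:
    ((∀ (k : ℕ) (θ : Wform C Xv Θ k), IsFormP θ →
        -- C∞-linearity in θ
        (∀ f : C, dT act D (dT act D (f • θ)) = f • dT act D (dT act D θ)) ∧
        (∀ θ' : Wform C Xv Θ k, IsFormP θ' →
          dT act D (dT act D (θ + θ')) = dT act D (dT act D θ) + dT act D (dT act D θ')) ∧
        -- C∞-linearity in each argument x_i
        (∀ (v : Fin (k+2) → TT Xv Θ) (i : Fin (k+2)) (f : C) (x : TT Xv Θ),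
          dT act D (dT act D θ) (Function.update v i (f • x))
            = f * dT act D (dT act D θ) (Function.update v i x)) ∧
        (∀ (v : Fin (k+2) → TT Xv Θ) (i : Fin (k+2)) (x y : TT Xv Θ),
          dT act D (dT act D θ) (Function.update v i (x + y))
            = dT act D (dT act D θ) (Function.update v i x)
              + dT act D (dT act D θ) (Function.update v i y)))
      ↔ TorsionFree lie D)
    ∧
    -- (2) if `D^𝕋` is `TM`-torsion free, the quotient by the image of `d^𝕋 ∘ d^𝕋`
    --     is a differential complex under the induced derivation:
    (TorsionFree lie D →
      ∃ dtilde : (k : ℕ) →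
          ((Fin k → TT Xv Θ) → C) ⧸ JsubG C act D k →
          ((Fin (k+1) → TT Xv Θ) → C) ⧸ JsubG C act D (k+1),
        (∀ (k : ℕ) (θ : Wform C Xv Θ k),
          dtilde k (Submodule.Quotient.mk θ) = Submodule.Quotient.mk (dT act D θ)) ∧
        (∀ (k : ℕ) (q : ((Fin k → TT Xv Θ) → C) ⧸ JsubG C act D k),
          dtilde (k+1) (dtilde k q) = 0)) := by
  constructor
  · constructor
    · -- tensoriality of `d∘d` forces torsion-freeness
      intro H
      apply tf_of_ddconst hds
      intro f
      have hθ1 : IsFormP (fun _ : Fin 0 → TT Xv Θ => (1:C)) :=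
        ⟨fun v i => i.elim0, fun v i => i.elim0, fun v i => i.elim0⟩
      have h1 := (H 0 (fun _ => (1:C)) hθ1).1 f
      have hfs : (f • (fun _ : Fin 0 → TT Xv Θ => (1:C))) = (fun _ : Fin 0 → TT Xv Θ => f) := by
        funext v
        simp
      have hc1 : dTG act D (fun _ : Fin 0 → TT Xv Θ => (1:C)) = (0 : Wform C Xv Θ 1) := by
        rw [d_const]
        funext w
        rw [act_one' hds]
        rfl
      have hz : dT act D (dT act D (fun _ : Fin 0 → TT Xv Θ => (1:C))) = 0 := by
        show dTG act D (dTG act D (fun _ : Fin 0 → TT Xv Θ => (1:C))) = 0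
        rw [hc1, d_zero hds]
      rw [hfs, hz, smul_zero] at h1
      exact h1
    · -- torsion freeness gives tensoriality
      intro hTF k θ hθ
      have hM : Multilin θ := ⟨hθ.1, hθ.2.1⟩
      have hM2 : Multilin (dTG act D (dTG act D θ)) :=
        d_multilin hds hD (d_multilin hds hD hM)
      refine ⟨fun f => dd_smul hds hTF f θ, fun θ' _ => ?_,
        fun v i f x => hM2.2 v i f x, fun v i x y => hM2.1 v i x y⟩
      show dTG act D (dTG act D (θ + θ')) = _
      rw [d_add hds, d_add hds]
  · -- the induced differential on the quotient complex
    intro hTF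
    refine ⟨fun k => Quotient.lift
        (fun θ : Wform C Xv Θ k =>
          (Submodule.Quotient.mk (dTG act D θ) :
            ((Fin (k+1) → TT Xv Θ) → C) ⧸ JsubG C act D (k+1)))
        (fun a b hab => lift_wd hds hTF a b hab), fun k θ => rfl, fun k q => ?_⟩
    obtain ⟨θ, rfl⟩ := Submodule.Quotient.mk_surjective _ q
    exact (Submodule.Quotient.mk_eq_zero _).mpr (mem_J_dd θ)

end GenGeom
end

section
/- Let D be a generalized connection on a vector bundle V over M, with G^b-eigendecomposition into classical connections ∇^b_{±,X} v := D_{x^{b±}} v. Then the (φ,b)-curvature of D decomposes as: ℱ^{φ,b}_{x^{b+},y^{b+}}(D) = F^b_{+;X,Y} and ℱ^{φ,b}_{x^{b−},y^{b−}}(D) = F^b_{−;X,Y}, where F^b_± are the classical curvature tensors of ∇^b_±, while the mixed component is ℱ^{φ,b}_{x^{b+},y^{b−}}(D) = F^{φ,b}_{+,−;X,Y} := (∇^b_{+,X}∇^b_{−,Y} − ∇^b_{−,∇^{−φ}_X Y}) − (∇^b_{−,Y}∇^b_{+,X} − ∇^b_{+,∇^{+φ}_Y X}). -/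
namespace GenGeom

section Aux

variable {C : Type} [CommRing C] [Algebra ℝ C]
variable {Xv : Type} [AddCommGroup Xv] [Module C Xv] [Module ℝ Xv] [IsScalarTower ℝ C Xv]
variable {Θ : Type} [AddCommGroup Θ] [Module C Θ] [Module ℝ Θ] [IsScalarTower ℝ C Θ]
variable {ev : Θ → Xv → C} {gf : Xv → Θ} {gs : Θ → Xv} {ib : Xv → Θ}
variable {nab : Xv → Xv → Xv} {iph : Xv → Xv → Θ}
variable {act : Xv → C → C} {lie : Xv → Xv → Xv}

lemma gf_zero (hg : IsRiemannian ev gf gs) : gf 0 = 0 := by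
  have h := hg.add 0 0
  rw [add_zero] at h
  exact (left_eq_add.mp h)

lemma gf_neg (hg : IsRiemannian ev gf gs) (X : Xv) : gf (-X) = - gf X := by
  have h := hg.add X (-X)
  rw [add_neg_cancel, gf_zero hg] at h
  exact eq_neg_of_add_eq_zero_left (by rw [add_comm]; exact h.symm)

lemma gf_sub (hg : IsRiemannian ev gf gs) (X Y : Xv) : gf (X - Y) = gf X - gf Y := by
  rw [sub_eq_add_neg, hg.add, gf_neg hg, sub_eq_add_neg]

lemma ib_zero (hb : IsTwoFormMap ev ib) : ib 0 = (0 : Θ) := by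
  have h := hb.add 0 0
  rw [add_zero] at h
  exact (left_eq_add.mp h)

lemma ib_neg (hb : IsTwoFormMap ev ib) (X : Xv) : ib (-X) = - ib X := by
  have h := hb.add X (-X)
  rw [add_neg_cancel, ib_zero hb] at h
  exact eq_neg_of_add_eq_zero_left (by rw [add_comm]; exact h.symm)

lemma ib_sub (hb : IsTwoFormMap ev ib) (X Y : Xv) : ib (X - Y) = ib X - ib Y := by
  rw [sub_eq_add_neg, hb.add, ib_neg hb, sub_eq_add_neg]

lemma gs_zero (hg : IsRiemannian ev gf gs) : gs 0 = (0 : Xv) := by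
  have h := hg.sharp_flat 0
  rwa [gf_zero hg] at h

lemma nab_zero_right (hnab : IsLeviCivita act lie ev gf nab) (X : Xv) : nab X 0 = 0 := by
  have h := hnab.add_right X 0 0
  rw [add_zero] at h
  exact (left_eq_add.mp h)

lemma nab_zero_left (hnab : IsLeviCivita act lie ev gf nab) (Y : Xv) : nab 0 Y = 0 := by
  have h := hnab.add_left 0 0 Y
  rw [add_zero] at h
  exact (left_eq_add.mp h)

lemma iph_zero_right (hph : IsThreeFormMap ev iph) (X : Xv) : iph X 0 = 0 := by
  have h := hph.add_right X 0 0
  rw [add_zero] at h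
  exact (left_eq_add.mp h)

lemma iph_zero_left (hph : IsThreeFormMap ev iph) (Y : Xv) : iph 0 Y = 0 := by
  have h := hph.add_left 0 0 Y
  rw [add_zero] at h
  exact (left_eq_add.mp h)

lemma half_double (X : Xv) : (2:ℝ)⁻¹ • (X + X) = X := by
  rw [← two_smul ℝ X, smul_smul]
  norm_num

lemma decP_ebp (hg : IsRiemannian ev gf gs) (X : Xv) :
    decP gs ib (ebp gf ib X) = X := by
  simp only [decP, ebp, add_sub_cancel_left, hg.sharp_flat]
  exact half_double X

lemma decM_ebp (hg : IsRiemannian ev gf gs) (X : Xv) :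
    decM gs ib (ebp gf ib X) = 0 := by
  simp only [decM, ebp, add_sub_cancel_left, hg.sharp_flat, sub_self, smul_zero]

lemma decP_ebm (hg : IsRiemannian ev gf gs) (X : Xv) :
    decP gs ib (ebm gf ib X) = 0 := by
  have h : ib X - gf X - ib X = gf (-X) := by rw [gf_neg hg]; abel
  simp only [decP, ebm, h, hg.sharp_flat, add_neg_cancel, smul_zero]

lemma decM_ebm (hg : IsRiemannian ev gf gs) (X : Xv) :
    decM gs ib (ebm gf ib X) = X := by
  have h : ib X - gf X - ib X = gf (-X) := by rw [gf_neg hg]; abel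
  simp only [decM, ebm, h, hg.sharp_flat, sub_neg_eq_add]
  exact half_double X

lemma ebp_zero : ebp gf ib 0 = (0 : TT Xv Θ) ∨ True := Or.inr trivial

lemma ebp_zero' (hg : IsRiemannian ev gf gs) (hb : IsTwoFormMap ev ib) :
    ebp gf ib (0 : Xv) = 0 := by
  simp [ebp, gf_zero hg, ib_zero hb]

lemma ebm_zero' (hg : IsRiemannian ev gf gs) (hb : IsTwoFormMap ev ib) :
    ebm gf ib (0 : Xv) = 0 := by
  simp [ebm, gf_zero hg, ib_zero hb]

lemma ebp_sub (hg : IsRiemannian ev gf gs) (hb : IsTwoFormMap ev ib) (X Y : Xv) :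
    ebp gf ib X - ebp gf ib Y = ebp gf ib (X - Y) := by
  simp only [ebp, gf_sub hg, ib_sub hb, Prod.sub_def]
  congr 1
  abel

lemma ebm_sub (hg : IsRiemannian ev gf gs) (hb : IsTwoFormMap ev ib) (X Y : Xv) :
    ebm gf ib X - ebm gf ib Y = ebm gf ib (X - Y) := by
  simp only [ebm, gf_sub hg, ib_sub hb, Prod.sub_def]
  congr 1
  abel

lemma nabP_zero_left (hg : IsRiemannian ev gf gs) (hnab : IsLeviCivita act lie ev gf nab)
    (hph : IsThreeFormMap ev iph) (Y : Xv) : nabP gs nab iph 0 Y = 0 := by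
  simp [nabP, nab_zero_left hnab, iph_zero_left hph, gs_zero hg]

lemma nabM_zero_right (hg : IsRiemannian ev gf gs) (hnab : IsLeviCivita act lie ev gf nab)
    (hph : IsThreeFormMap ev iph) (X : Xv) : nabM gs nab iph X 0 = 0 := by
  simp [nabM, nab_zero_right hnab, iph_zero_right hph, gs_zero hg]

lemma nabP_zero_right (hg : IsRiemannian ev gf gs) (hnab : IsLeviCivita act lie ev gf nab)
    (hph : IsThreeFormMap ev iph) (X : Xv) : nabP gs nab iph X 0 = 0 := by
  simp [nabP, nab_zero_right hnab, iph_zero_right hph, gs_zero hg]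

lemma nabM_zero_left (hg : IsRiemannian ev gf gs) (hnab : IsLeviCivita act lie ev gf nab)
    (hph : IsThreeFormMap ev iph) (Y : Xv) : nabM gs nab iph 0 Y = 0 := by
  simp [nabM, nab_zero_left hnab, iph_zero_left hph, gs_zero hg]

lemma Dphib_pp (hg : IsRiemannian ev gf gs) (hb : IsTwoFormMap ev ib)
    (hnab : IsLeviCivita act lie ev gf nab) (hph : IsThreeFormMap ev iph) (X Y : Xv) :
    Dphib gf gs ib nab iph (ebp gf ib X) (ebp gf ib Y) = ebp gf ib (nab X Y) := by
  rw [Dphib, decP_ebp hg, decM_ebp hg, decP_ebp hg, decM_ebp hg,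
    nabM_zero_right hg hnab hph, nabP_zero_left hg hnab hph, nab_zero_left hnab,
    ebp_zero' hg hb, ebm_zero' hg hb]
  abel

lemma Dphib_mm (hg : IsRiemannian ev gf gs) (hb : IsTwoFormMap ev ib)
    (hnab : IsLeviCivita act lie ev gf nab) (hph : IsThreeFormMap ev iph) (X Y : Xv) :
    Dphib gf gs ib nab iph (ebm gf ib X) (ebm gf ib Y) = ebm gf ib (nab X Y) := by
  rw [Dphib, decP_ebm hg, decM_ebm hg, decP_ebm hg, decM_ebm hg,
    nabM_zero_left hg hnab hph, nabP_zero_right hg hnab hph, nab_zero_left hnab,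
    ebp_zero' hg hb, ebm_zero' hg hb]
  abel

lemma Dphib_pm (hg : IsRiemannian ev gf gs) (hb : IsTwoFormMap ev ib)
    (hnab : IsLeviCivita act lie ev gf nab) (hph : IsThreeFormMap ev iph) (X Y : Xv) :
    Dphib gf gs ib nab iph (ebp gf ib X) (ebm gf ib Y) = ebm gf ib (nabM gs nab iph X Y) := by
  rw [Dphib, decP_ebp hg, decM_ebp hg, decP_ebm hg, decM_ebm hg,
    nab_zero_right hnab, nabP_zero_left hg hnab hph, nab_zero_left hnab,
    ebp_zero' hg hb, ebm_zero' hg hb]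
  abel

lemma Dphib_mp (hg : IsRiemannian ev gf gs) (hb : IsTwoFormMap ev ib)
    (hnab : IsLeviCivita act lie ev gf nab) (hph : IsThreeFormMap ev iph) (X Y : Xv) :
    Dphib gf gs ib nab iph (ebm gf ib X) (ebp gf ib Y) = ebp gf ib (nabP gs nab iph X Y) := by
  rw [Dphib, decP_ebm hg, decM_ebm hg, decP_ebp hg, decM_ebp hg,
    nab_zero_left hnab, nabM_zero_right hg hnab hph, nab_zero_right hnab,
    ebp_zero' hg hb, ebm_zero' hg hb]
  abel

lemma DV_zero {V : Type} [AddCommGroup V] [Module C V]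
    (DV : TT Xv Θ → V → V) (hDV : IsGenConnOn act DV) (v : V) : DV 0 v = 0 := by
  have h := hDV.add_left 0 0 v
  rw [add_zero] at h
  exact (left_eq_add.mp h)

lemma DV_sub_left {V : Type} [AddCommGroup V] [Module C V]
    (DV : TT Xv Θ → V → V) (hDV : IsGenConnOn act DV) (x y : TT Xv Θ) (v : V) :
    DV (x - y) v = DV x v - DV y v := by
  have h := hDV.add_left (x - y) y v
  rw [sub_add_cancel] at h
  rw [h]
  abel

end Aux

/-!
STATEMENT 10.  Let `D` be a generalized connection on a vector bundle `V` over `M`,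
with `G^b`-eigendecomposition into classical connections `∇^b_{±,X} v := D_{x^{b±}} v`.
Then the `(φ,b)`-curvature of `D` decomposes as
`ℱ^{φ,b}_{x^{b+},y^{b+}}(D) = F^b_{+;X,Y}`, `ℱ^{φ,b}_{x^{b−},y^{b−}}(D) = F^b_{−;X,Y}`
(the classical curvatures of `∇^b_±`), while the mixed component is
`ℱ^{φ,b}_{x^{b+},y^{b−}}(D) = (∇^b_{+,X}∇^b_{−,Y} − ∇^b_{−,∇^{−φ}_X Y})
  − (∇^b_{−,Y}∇^b_{+,X} − ∇^b_{+,∇^{+φ}_Y X})`.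
-/
theorem stmt_10
    {C : Type} [CommRing C] [Algebra ℝ C]
    {Xv : Type} [AddCommGroup Xv] [Module C Xv] [Module ℝ Xv] [IsScalarTower ℝ C Xv]
    {Θ : Type} [AddCommGroup Θ] [Module C Θ] [Module ℝ Θ] [IsScalarTower ℝ C Θ]
    {V : Type} [AddCommGroup V] [Module C V]
    (act : Xv → C → C) (lie : Xv → Xv → Xv) (ev : Θ → Xv → C)
    (hds : IsDiffStructure act lie) (hev : IsEvStructure ev)
    (gf : Xv → Θ) (gs : Θ → Xv) (hg : IsRiemannian ev gf gs)
    (ib : Xv → Θ) (hb : IsTwoFormMap ev ib)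
    (nab : Xv → Xv → Xv) (hnab : IsLeviCivita act lie ev gf nab)
    (iph : Xv → Xv → Θ) (hph : IsThreeFormMap ev iph)
    (DV : TT Xv Θ → V → V) (hDV : IsGenConnOn act DV) :
    -- with `∇^b_{+,X} v = DV (x^{b+}) v` and `∇^b_{−,X} v = DV (x^{b−}) v` :
    (∀ (X Y : Xv) (v : V),
        curvOn (Dphib gf gs ib nab iph) DV (ebp gf ib X) (ebp gf ib Y) v
          = DV (ebp gf ib X) (DV (ebp gf ib Y) v) - DV (ebp gf ib Y) (DV (ebp gf ib X) v)
            - DV (ebp gf ib (lie X Y)) v) ∧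
    (∀ (X Y : Xv) (v : V),
        curvOn (Dphib gf gs ib nab iph) DV (ebm gf ib X) (ebm gf ib Y) v
          = DV (ebm gf ib X) (DV (ebm gf ib Y) v) - DV (ebm gf ib Y) (DV (ebm gf ib X) v)
            - DV (ebm gf ib (lie X Y)) v) ∧
    (∀ (X Y : Xv) (v : V),
        curvOn (Dphib gf gs ib nab iph) DV (ebp gf ib X) (ebm gf ib Y) v
          = (DV (ebp gf ib X) (DV (ebm gf ib Y) v) - DV (ebm gf ib (nabM gs nab iph X Y)) v)
            - (DV (ebm gf ib Y) (DV (ebp gf ib X) v)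
                - DV (ebp gf ib (nabP gs nab iph Y X)) v)) := by
  refine ⟨?_, ?_, ?_⟩ <;> intro X Y v
  · rw [curvOn, diamond, Dphib_pp hg hb hnab hph, Dphib_pp hg hb hnab hph,
      ebp_sub hg hb, ← hnab.torsion_free]
  · rw [curvOn, diamond, Dphib_mm hg hb hnab hph, Dphib_mm hg hb hnab hph,
      ebm_sub hg hb, ← hnab.torsion_free]
  · rw [curvOn, diamond, Dphib_pm hg hb hnab hph, Dphib_mp hg hb hnab hph,
      DV_sub_left DV hDV]
    abel

end GenGeom
end
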